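/- arXiv:2111.11765 — 6 statements merged into one kernel-verified Lean document; each statement's English description precedes it below -/
import Mathlib

section
/- Let Z and W be compact Hausdorff topological spaces, let Y be a finite index type, and for each y ∈ Y let λ_y : W → Z be a continuous map and q_y : W → M_s(ℂ) a continuous map such that for every w ∈ W: each q_y(w) is a self-adjoint idempotent (a projection), q_y(w)·q_{y'}(w) = 0 whenever y ≠ y', and Σ_{y∈Y} q_y(w) = 1. Then the generalized diagonal map φ : C(Z, M_r(ℂ)) → C(W, M_r(ℂ) ⊗ M_s(ℂ)) defined by φ(a)(w) = Σ_{y∈Y} a(λ_y(w)) ⊗ q_y(w) is well defined (each φ(a) is continuous) and is a unital star-algebra homomorphism: it is ℂ-linear, multiplicative, star-preserving, and maps the constant function 1 to the constant function 1. -/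
/-!
The `q_y(w)` form a complete family of orthogonal idempotents, so in a product
`φ(a)(w) φ(b)(w)` every cross term carries a factor `q_y(w) q_{y'}(w) = 0` and only the
terms `(a b)(λ_y(w)) ⊗ q_y(w)` survive. Unitality is `Σ_y 1 ⊗ q_y(w) = 1 ⊗ 1`, and
self-adjointness of the `q_y(w)` gives compatibility with the star.
-/

open Kronecker Matrix

theorem Matrix.kronecker_sum {R Y l m n p : Type*} [CommSemiring R] [Fintype Y]
    (A : Matrix l m R) (B : Y → Matrix n p R) :
    A ⊗ₖ ∑ y, B y = ∑ y, A ⊗ₖ B y :=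
  map_sum (kroneckerBilinear (R := R) (α := R) A) B Finset.univ

theorem OrthogonalIdempotents.sum_kronecker_mul_sum_kronecker {R Y l m n p : Type*}
    [CommSemiring R] [Fintype Y] [Fintype m] [Fintype n] [DecidableEq n]
    {e : Y → Matrix n n R} (he : OrthogonalIdempotents e)
    (A : Y → Matrix l m R) (B : Y → Matrix m p R) :
    (∑ y, A y ⊗ₖ e y) * (∑ y, B y ⊗ₖ e y) = ∑ y, (A y * B y) ⊗ₖ e y := by
  classical
  simp_rw [Matrix.sum_mul, Matrix.mul_sum, ← mul_kronecker_mul, he.mul_eq]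
  simp only [apply_ite, kronecker_zero, Finset.sum_ite_eq, Finset.mem_univ, if_true]

theorem Continuous.matrix_kronecker {R X l m n p : Type*} [TopologicalSpace X]
    [TopologicalSpace R] [Mul R] [ContinuousMul R]
    {A : X → Matrix l m R} {B : X → Matrix n p R} (hA : Continuous A) (hB : Continuous B) :
    Continuous fun x => A x ⊗ₖ B x :=
  continuous_matrix fun i j => (hA.matrix_elem i.1 j.1).mul (hB.matrix_elem i.2 j.2)

section GeneralizedDiagonal

variable {R Z W Y m n : Type*} [CommRing R] [StarRing R] [TopologicalSpace R]
  [IsTopologicalRing R] [ContinuousStar R] [TopologicalSpace Z] [TopologicalSpace W]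
  [Fintype Y] [Fintype m] [DecidableEq m] [Fintype n] [DecidableEq n]
  (lam : Y → C(W, Z)) (q : Y → C(W, Matrix n n R))

@[simps]
def ContinuousMap.sumKroneckerComp (a : C(Z, Matrix m m R)) :
    C(W, Matrix (m × n) (m × n) R) where
  toFun w := ∑ y, a (lam y w) ⊗ₖ q y w
  continuous_toFun := continuous_finsetSum _ fun y _ =>
    (a.continuous.comp (lam y).continuous).matrix_kronecker (q y).continuous

noncomputable def generalizedDiagonal
    (hq : ∀ w, CompleteOrthogonalIdempotents (q · w))
    (hq_star : ∀ y w, IsSelfAdjoint (q y w)) :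
    C(Z, Matrix m m R) →⋆ₐ[R] C(W, Matrix (m × n) (m × n) R) :=
  { AlgHom.ofLinearMap
      { toFun := ContinuousMap.sumKroneckerComp lam q
        map_add' a b := by ext1 w; simp [add_kronecker, Finset.sum_add_distrib]
        map_smul' c a := by ext1 w; simp [smul_kronecker, Finset.smul_sum] }
      (by ext1 w; simp [← kronecker_sum, (hq w).complete])
      (fun a b => by
        ext1 w; simp [(hq w).toOrthogonalIdempotents.sum_kronecker_mul_sum_kronecker])
    with
    map_star' a := by
      ext1 w
      simp [star_eq_conjTranspose, conjTranspose_kronecker,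
        fun y => (hq_star y w).isHermitian.eq] }

theorem generalizedDiagonal_apply
    (hq : ∀ w, CompleteOrthogonalIdempotents (q · w)) (hq_star : ∀ y w, IsSelfAdjoint (q y w))
    (a : C(Z, Matrix m m R)) (w : W) :
    generalizedDiagonal lam q hq hq_star a w = ∑ y, a (lam y w) ⊗ₖ q y w :=
  rfl

end GeneralizedDiagonal

theorem stmt_0_general (Z W : Type*) [TopologicalSpace Z] [TopologicalSpace W]
    (Y : Type*) [Fintype Y] (r s : ℕ)
    (lam : Y → C(W, Z)) (q : Y → C(W, Matrix (Fin s) (Fin s) ℂ))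
    (hproj : ∀ y w, IsSelfAdjoint (q y w) ∧ q y w * q y w = q y w)
    (horth : ∀ y y' w, y ≠ y' → q y w * q y' w = 0)
    (hsum : ∀ w, ∑ y, q y w = 1) :
    (∀ a : C(Z, Matrix (Fin r) (Fin r) ℂ),
      Continuous (fun w => ∑ y, (a (lam y w)) ⊗ₖ (q y w))) ∧
    ∃ φ : C(Z, Matrix (Fin r) (Fin r) ℂ) →
          C(W, Matrix (Fin r × Fin s) (Fin r × Fin s) ℂ),
      (∀ a w, φ a w = ∑ y, (a (lam y w)) ⊗ₖ (q y w)) ∧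
      (∀ (c : ℂ) a, φ (c • a) = c • φ a) ∧
      (∀ a b, φ (a + b) = φ a + φ b) ∧
      (∀ a b, φ (a * b) = φ a * φ b) ∧
      (∀ a, φ (star a) = star (φ a)) ∧
      φ 1 = 1 := by
  have hq : ∀ w, CompleteOrthogonalIdempotents (q · w) := fun w =>
    CompleteOrthogonalIdempotents.iff_ortho_complete.mpr
      ⟨fun y y' => horth y y' w, hsum w⟩
  let φ := generalizedDiagonal (R := ℂ) (m := Fin r) lam q hq fun y w => (hproj y w).1
  exact ⟨fun a => (φ a).continuous, φ, generalizedDiagonal_apply lam q _ _, map_smul φ,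
    map_add φ, map_mul φ, map_star φ, map_one φ⟩

/-- The generalized diagonal map
`φ(a)(w) = Σ_{y ∈ Y} a(λ_y(w)) ⊗ q_y(w)` from `C(Z, M_r(ℂ))` to
`C(W, M_r(ℂ) ⊗ M_s(ℂ))` is well defined (each `φ(a)` is continuous) and is a
unital star-algebra homomorphism. -/
theorem stmt_0 (Z W : Type*) [TopologicalSpace Z] [CompactSpace Z] [T2Space Z]
    [TopologicalSpace W] [CompactSpace W] [T2Space W]
    (Y : Type*) [Fintype Y] (r s : ℕ)
    (lam : Y → C(W, Z)) (q : Y → C(W, Matrix (Fin s) (Fin s) ℂ))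
    (hproj : ∀ y w, IsSelfAdjoint (q y w) ∧ q y w * q y w = q y w)
    (horth : ∀ y y' w, y ≠ y' → q y w * q y' w = 0)
    (hsum : ∀ w, ∑ y, q y w = 1) :
    (∀ a : C(Z, Matrix (Fin r) (Fin r) ℂ),
      Continuous (fun w => ∑ y, (a (lam y w)) ⊗ₖ (q y w))) ∧
    ∃ φ : C(Z, Matrix (Fin r) (Fin r) ℂ) →
          C(W, Matrix (Fin r × Fin s) (Fin r × Fin s) ℂ),
      (∀ a w, φ a w = ∑ y, (a (lam y w)) ⊗ₖ (q y w)) ∧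
      (∀ (c : ℂ) a, φ (c • a) = c • φ a) ∧
      (∀ a b, φ (a + b) = φ a + φ b) ∧
      (∀ a b, φ (a * b) = φ a * φ b) ∧
      (∀ a, φ (star a) = star (φ a)) ∧
      φ 1 = 1 :=
  stmt_0_general Z W Y r s lam q hproj horth hsum
end

section
/- Let Z and W be compact Hausdorff topological spaces, let Y be a finite index type, r ≥ 1, and for each y ∈ Y let λ_y : W → Z be a continuous map and q_y : W → M_s(ℂ) a continuous map such that for every w ∈ W: each q_y(w) is a nonzero self-adjoint idempotent, and q_y(w)·q_{y'}(w) = 0 whenever y ≠ y'. Let φ : C(Z, M_r(ℂ)) → C(W, M_r(ℂ) ⊗ M_s(ℂ)) be the generalized diagonal map φ(a)(w) = Σ_{y∈Y} a(λ_y(w)) ⊗ q_y(w). Then φ is injective if and only if ⋃_{y∈Y} λ_y(W) = Z. -/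
open Kronecker

/-- The generalized diagonal map
`φ(a)(w) = Σ_{y ∈ Y} a(λ_y(w)) ⊗ q_y(w)` is injective if and only if the
images of the maps `λ_y` cover `Z`. -/
theorem stmt_1 (Z W : Type*) [TopologicalSpace Z] [CompactSpace Z] [T2Space Z]
    [TopologicalSpace W] [CompactSpace W] [T2Space W]
    (Y : Type*) [Fintype Y] (r s : ℕ) (hr : 1 ≤ r)
    (lam : Y → C(W, Z)) (q : Y → C(W, Matrix (Fin s) (Fin s) ℂ))
    (hproj : ∀ y w, IsSelfAdjoint (q y w) ∧ q y w * q y w = q y w ∧ q y w ≠ 0)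
    (horth : ∀ y y' w, y ≠ y' → q y w * q y' w = 0) :
    Function.Injective
      (fun (a : C(Z, Matrix (Fin r) (Fin r) ℂ)) =>
        (fun w => ∑ y, (a (lam y w)) ⊗ₖ (q y w) :
          W → Matrix (Fin r × Fin s) (Fin r × Fin s) ℂ))
      ↔ (⋃ y, Set.range (lam y)) = Set.univ := by
  constructor
  · intro hinj
    by_contra hcov
    obtain ⟨z₀, hz₀⟩ : ∃ z₀, z₀ ∉ ⋃ y, Set.range (lam y) := by
      rw [← Set.ne_univ_iff_exists_notMem]; exact hcov
    have hK : IsClosed (⋃ y, Set.range (lam y)) :=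
      isClosed_iUnion_of_finite fun y => (isCompact_range (lam y).continuous).isClosed
    obtain ⟨f, hf0, hf1, -⟩ := exists_continuous_zero_one_of_isClosed hK isClosed_singleton
      (Set.disjoint_singleton_right.mpr hz₀)
    set a : C(Z, Matrix (Fin r) (Fin r) ℂ) :=
      ⟨fun z => ((f z : ℝ) : ℂ) • (1 : Matrix (Fin r) (Fin r) ℂ),
        ((Complex.continuous_ofReal.comp f.continuous).smul continuous_const)⟩ with ha
    have key : (fun w => ∑ y, (a (lam y w)) ⊗ₖ (q y w)) =
        (fun w => ∑ y, ((0 : C(Z, Matrix (Fin r) (Fin r) ℂ)) (lam y w)) ⊗ₖ (q y w)) := by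
      funext w
      refine Finset.sum_congr rfl fun y _ => ?_
      have hfz : f (lam y w) = 0 := hf0 (Set.mem_iUnion.mpr ⟨y, Set.mem_range_self w⟩)
      have : a (lam y w) = 0 := by simp [ha, hfz]
      rw [this]; simp
    have h0 : a = 0 := hinj key
    have h1 : f z₀ = 1 := hf1 rfl
    have : a z₀ = 0 := by rw [h0]; rfl
    have hcontra : (1 : ℂ) = 0 := by
      have := congrFun (congrFun this ⟨0, hr⟩) ⟨0, hr⟩
      simpa [ha, h1, Matrix.one_apply] using this
    exact one_ne_zero hcontra
  · intro hcov a b hab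
    ext z : 1
    have hz : z ∈ ⋃ y, Set.range (lam y) := hcov ▸ Set.mem_univ z
    obtain ⟨y, w, hw⟩ : ∃ y w, lam y w = z := by
      simpa [Set.mem_iUnion] using hz
    have hw' := congrFun hab w
    have hsub : ∀ (A B : Matrix (Fin r) (Fin r) ℂ) (C : Matrix (Fin s) (Fin s) ℂ),
        (A - B) ⊗ₖ C = A ⊗ₖ C - B ⊗ₖ C := fun A B C => by
      ext ⟨i, k⟩ ⟨j, l⟩
      simp [Matrix.kroneckerMap_apply, sub_mul]
    have hsum : ∑ y', (a (lam y' w) - b (lam y' w)) ⊗ₖ (q y' w) = 0 := by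
      simp only [hsub, Finset.sum_sub_distrib]
      simp only at hw'
      rw [hw', sub_self]
    have hmul : (a (lam y w) - b (lam y w)) ⊗ₖ (q y w) = 0 := by
      have h2 := congrArg (· * ((1 : Matrix (Fin r) (Fin r) ℂ) ⊗ₖ (q y w))) hsum
      simp only [Finset.sum_mul, zero_mul, ← Matrix.mul_kronecker_mul, mul_one] at h2
      rw [Finset.sum_eq_single y] at h2
      · rwa [(hproj y w).2.1] at h2
      · intro y' _ hne
        rw [horth y' y w hne, Matrix.kronecker_zero]
      · intro h; exact absurd (Finset.mem_univ y) h
    obtain ⟨k, l, hkl⟩ : ∃ k l, q y w k l ≠ 0 := by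
      by_contra h
      push_neg at h
      exact (hproj y w).2.2 (by ext k l; simp [h k l])
    have heq : a (lam y w) = b (lam y w) := by
      ext i j
      have := congrFun (congrFun hmul (i, k)) (j, l)
      simp only [Matrix.kroneckerMap_apply, Matrix.sub_apply, Matrix.zero_apply] at this
      have := mul_eq_zero.mp this
      rcases this with h | h
      · exact sub_eq_zero.mp h
      · exact absurd h hkl
    rw [← hw]; exact heq
end

section
/- Let Z be a compact Hausdorff topological space, let u₁, u₂ be unitary matrices indexed by Fin n × Fin k over ℂ, let x, x' : Fin k → Z with x injective, and let μ be a permutation of Fin k such that x(s) = x'(μ(s)) for all s ∈ Fin k. Suppose that for every continuous function f : Z → M_n(ℂ) one has u₁·(Σ_{s} f(x(s)) ⊗ E_s)·u₁⋆ = u₂·(Σ_{s} f(x'(s)) ⊗ E_s)·u₂⋆. Then: (i) for every s ∈ Fin k, u₁·(1 ⊗ E_s)·u₁⋆ = u₂·(1 ⊗ E_{μ(s)})·u₂⋆; and (ii) for every c ∈ M_n(ℂ), u₁·(c ⊗ 1)·u₁⋆ = u₂·(c ⊗ 1)·u₂⋆. -/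
open Kronecker

/-!
Since `x' = x ∘ μ⁻¹`, the points `x' t` are distinct as well. Plugging in a Urysohn function that
is `1` at `x s` and `0` at every other `x r` times the identity isolates a single block on each side,
giving (i); plugging in the constant function `c` gives (ii).
-/

theorem Matrix.sum_kronecker_single_one {R m n ι : Type*} [CommSemiring R] [Fintype ι]
    [DecidableEq ι] (c : Matrix m n R) :
    ∑ s : ι, c ⊗ₖ Matrix.single s s (1 : R) = c ⊗ₖ (1 : Matrix ι ι R) := by
  rw [← Matrix.sum_single_one]
  exact (map_sum (Matrix.kroneckerBilinear (R := R) c) _ _).symm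

theorem Matrix.sum_ite_eq_kronecker {R l m n p ι : Type*} [NonUnitalNonAssocSemiring R]
    [Fintype ι] [DecidableEq ι] (A : Matrix l m R) (B : ι → Matrix n p R) (s : ι) :
    ∑ r, (if r = s then A else 0) ⊗ₖ B r = A ⊗ₖ B s := by
  rw [Finset.sum_eq_single s] <;> simp +contextual

theorem exists_continuousMap_apply_eq_ite {Z ι : Type*} [TopologicalSpace Z] [NormalSpace Z]
    [T1Space Z] [Finite ι] [DecidableEq ι] {x : ι → Z} (hx : Function.Injective x) (s : ι) :
    ∃ g : C(Z, ℝ), ∀ r, g (x r) = if r = s then 1 else 0 := by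
  have hdisj : Disjoint (x '' {r | r ≠ s}) {x s} := by
    rw [Set.disjoint_singleton_right]
    rintro ⟨r, hr, hrs⟩
    exact hr (hx hrs)
  obtain ⟨g, hg0, hg1, -⟩ := exists_continuous_zero_one_of_isClosed
    ((Set.toFinite _).image x).isClosed isClosed_singleton hdisj
  refine ⟨g, fun r => ?_⟩
  split_ifs with hr
  · exact hr ▸ hg1 rfl
  · exact hg0 ⟨r, hr, rfl⟩

theorem stmt_3_general (Z : Type*) [TopologicalSpace Z] [CompactSpace Z] [T2Space Z]
    (n k : ℕ)
    (u₁ u₂ : Matrix (Fin n × Fin k) (Fin n × Fin k) ℂ)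
    (x x' : Fin k → Z) (hx : Function.Injective x)
    (μ : Equiv.Perm (Fin k)) (hμ : ∀ s, x s = x' (μ s))
    (h : ∀ f : C(Z, Matrix (Fin n) (Fin n) ℂ),
      u₁ * (∑ s, (f (x s)) ⊗ₖ Matrix.single s s (1 : ℂ)) * star u₁
        = u₂ * (∑ s, (f (x' s)) ⊗ₖ Matrix.single s s (1 : ℂ)) * star u₂) :
    (∀ s : Fin k,
      u₁ * ((1 : Matrix (Fin n) (Fin n) ℂ) ⊗ₖ Matrix.single s s (1 : ℂ)) * star u₁
        = u₂ * ((1 : Matrix (Fin n) (Fin n) ℂ) ⊗ₖ Matrix.single (μ s) (μ s) (1 : ℂ)) * star u₂) ∧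
    (∀ c : Matrix (Fin n) (Fin n) ℂ,
      u₁ * (c ⊗ₖ (1 : Matrix (Fin k) (Fin k) ℂ)) * star u₁
        = u₂ * (c ⊗ₖ (1 : Matrix (Fin k) (Fin k) ℂ)) * star u₂) := by
  have hx' : ∀ t, x' t = x (μ.symm t) := fun t => by simpa using (hμ (μ.symm t)).symm
  refine ⟨fun s => ?_, fun c => ?_⟩
  · obtain ⟨g, hg⟩ := exists_continuousMap_apply_eq_ite hx s
    let f : C(Z, Matrix (Fin n) (Fin n) ℂ) := ⟨fun z => (g z : ℂ) • 1, by fun_prop⟩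
    have hf : ∀ r, f (x r) = if r = s then 1 else 0 := fun r => by simp [f, hg, ite_smul]
    have hf' : ∀ t, f (x' t) = if t = μ s then 1 else 0 := fun t => by
      simp only [hx', hf, Equiv.symm_apply_eq]
    simpa only [hf, hf', Matrix.sum_ite_eq_kronecker] using h f
  · simpa only [ContinuousMap.const_apply, Matrix.sum_kronecker_single_one]
      using h (ContinuousMap.const Z c)

/-- If `u₁ · (Σ_s f(x(s)) ⊗ E_s) · u₁⋆ = u₂ · (Σ_s f(x'(s)) ⊗ E_s) · u₂⋆`
for all continuous `f : Z → M_n(ℂ)`, where `x` is injective and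
`x(s) = x'(μ(s))`, then the conjugated rank-one diagonal projections and the
conjugated constant blocks agree. -/
theorem stmt_3 (Z : Type*) [TopologicalSpace Z] [CompactSpace Z] [T2Space Z]
    (n k : ℕ)
    (u₁ u₂ : Matrix (Fin n × Fin k) (Fin n × Fin k) ℂ)
    (hu₁ : u₁ ∈ Matrix.unitaryGroup (Fin n × Fin k) ℂ)
    (hu₂ : u₂ ∈ Matrix.unitaryGroup (Fin n × Fin k) ℂ)
    (x x' : Fin k → Z) (hx : Function.Injective x)
    (μ : Equiv.Perm (Fin k)) (hμ : ∀ s, x s = x' (μ s))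
    (h : ∀ f : C(Z, Matrix (Fin n) (Fin n) ℂ),
      u₁ * (∑ s, (f (x s)) ⊗ₖ Matrix.single s s (1 : ℂ)) * star u₁
        = u₂ * (∑ s, (f (x' s)) ⊗ₖ Matrix.single s s (1 : ℂ)) * star u₂) :
    (∀ s : Fin k,
      u₁ * ((1 : Matrix (Fin n) (Fin n) ℂ) ⊗ₖ Matrix.single s s (1 : ℂ)) * star u₁
        = u₂ * ((1 : Matrix (Fin n) (Fin n) ℂ) ⊗ₖ Matrix.single (μ s) (μ s) (1 : ℂ)) * star u₂) ∧
    (∀ c : Matrix (Fin n) (Fin n) ℂ,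
      u₁ * (c ⊗ₖ (1 : Matrix (Fin k) (Fin k) ℂ)) * star u₁
        = u₂ * (c ⊗ₖ (1 : Matrix (Fin k) (Fin k) ℂ)) * star u₂) :=
  stmt_3_general Z n k u₁ u₂ x x' hx μ hμ h
end

section
/- Let Z be a compact Hausdorff topological space, let n ≥ 1, let u₁, u₂ be unitary matrices indexed by Fin n × Fin k over ℂ, and let x, x' : Fin k → Z. Suppose that for every continuous function f : Z → M_n(ℂ) one has u₁·(Σ_{s} f(x(s)) ⊗ E_s)·u₁⋆ = u₂·(Σ_{s} f(x'(s)) ⊗ E_s)·u₂⋆. Then there exists a permutation μ of Fin k such that x(s) = x'(μ(s)) for all s ∈ Fin k. -/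
open Kronecker

/-!
Taking traces kills the unitaries: for `f = g • 1` with `g : C(Z, ℝ)` this gives
`n • ∑ s, g (x s) = n • ∑ s, g (x' s)`. Since `Z` is completely regular, `g` can be chosen to
be `1` at a point `z` and `0` at the other values of `x` and `x'`, so `x` and `x'` have fibres of
the same size over every `z`, and hence differ by a permutation.
-/

open Matrix Set

theorem Matrix.trace_unitary_conj {m R : Type*} [Fintype m] [DecidableEq m] [CommRing R]
    [StarRing R] {u : Matrix m m R} (hu : u ∈ unitaryGroup m R) (A : Matrix m m R) :
    trace (u * A * star u) = trace A := by
  rw [trace_mul_cycle, Unitary.star_mul_self_of_mem hu, one_mul]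

theorem Matrix.trace_sum_kronecker_single {m ι R : Type*} [Fintype m] [Fintype ι] [DecidableEq ι]
    [CommSemiring R] (A : ι → Matrix m m R) :
    trace (∑ s, A s ⊗ₖ single s s (1 : R)) = ∑ s, trace (A s) := by
  simp only [trace_sum, trace_kronecker, trace_single_eq_same, mul_one]

theorem Matrix.sum_trace_eq_of_unitary_conj_eq {m ι R : Type*} [Fintype m] [DecidableEq m]
    [Fintype ι] [DecidableEq ι] [CommRing R] [StarRing R] {u₁ u₂ : Matrix (m × ι) (m × ι) R}
    (hu₁ : u₁ ∈ unitaryGroup (m × ι) R) (hu₂ : u₂ ∈ unitaryGroup (m × ι) R)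
    {A B : ι → Matrix m m R}
    (h : u₁ * (∑ s, A s ⊗ₖ single s s (1 : R)) * star u₁
      = u₂ * (∑ s, B s ⊗ₖ single s s (1 : R)) * star u₂) :
    ∑ s, trace (A s) = ∑ s, trace (B s) := by
  have htr := congrArg trace h
  rwa [trace_unitary_conj hu₁, trace_unitary_conj hu₂, trace_sum_kronecker_single,
    trace_sum_kronecker_single] at htr

theorem card_fiber_eq_of_forall_sum_eq {Z ι : Type*} [TopologicalSpace Z] [T35Space Z]
    [Fintype ι] {x x' : ι → Z} (h : ∀ g : C(Z, ℝ), ∑ s, g (x s) = ∑ s, g (x' s)) (z : Z) :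
    Nat.card {s // x s = z} = Nat.card {s // x' s = z} := by
  classical
  set K : Set Z := (range x ∪ range x') \ {z}
  have hK : IsClosed K := ((finite_range x).union (finite_range x')).sdiff.isClosed
  obtain ⟨f, hf, hfz, hfK⟩ :=
    CompletelyRegularSpace.completely_regular z K hK fun hz => hz.2 rfl
  have hsum : ∀ y : ι → Z, (∀ s, y s ∈ range x ∪ range x') →
      ∑ s, (1 - (f (y s) : ℝ)) = Nat.card {s // y s = z} := by
    intro y hy
    have hind : ∀ s, 1 - (f (y s) : ℝ) = if y s = z then 1 else 0 := by
      intro s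
      split_ifs with hs
      · simp [hs, hfz]
      · simp [hfK ⟨hy s, hs⟩]
    simp [hind, Finset.sum_boole, Nat.card_eq_fintype_card, Fintype.card_subtype]
  have hxx' := h ⟨fun w => 1 - (f w : ℝ), by fun_prop⟩
  simp only [ContinuousMap.coe_mk] at hxx'
  exact_mod_cast (hsum x fun s => .inl ⟨s, rfl⟩).symm.trans
    (hxx'.trans (hsum x' fun s => .inr ⟨s, rfl⟩))

theorem exists_perm_eq_comp_of_card_fiber_eq {ι α : Type*} [Finite ι] {x x' : ι → α}
    (h : ∀ a, Nat.card {s // x s = a} = Nat.card {s // x' s = a}) :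
    ∃ μ : Equiv.Perm ι, ∀ s, x s = x' (μ s) :=
  ⟨Equiv.ofFiberEquiv fun a => (Finite.card_eq.mp (h a)).some,
    fun s => (Equiv.ofFiberEquiv_map _ s).symm⟩

/-- If `u₁ · (Σ_s f(x(s)) ⊗ E_s) · u₁⋆ = u₂ · (Σ_s f(x'(s)) ⊗ E_s) · u₂⋆`
for all continuous `f : Z → M_n(ℂ)` (with `n ≥ 1` and `u₁, u₂` unitary), then
there is a permutation `μ` of `Fin k` with `x(s) = x'(μ(s))` for all `s`. -/
theorem stmt_4 (Z : Type*) [TopologicalSpace Z] [CompactSpace Z] [T2Space Z]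
    (n k : ℕ) (hn : 1 ≤ n)
    (u₁ u₂ : Matrix (Fin n × Fin k) (Fin n × Fin k) ℂ)
    (hu₁ : u₁ ∈ Matrix.unitaryGroup (Fin n × Fin k) ℂ)
    (hu₂ : u₂ ∈ Matrix.unitaryGroup (Fin n × Fin k) ℂ)
    (x x' : Fin k → Z)
    (h : ∀ f : C(Z, Matrix (Fin n) (Fin n) ℂ),
      u₁ * (∑ s, (f (x s)) ⊗ₖ Matrix.single s s (1 : ℂ)) * star u₁
        = u₂ * (∑ s, (f (x' s)) ⊗ₖ Matrix.single s s (1 : ℂ)) * star u₂) :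
    ∃ μ : Equiv.Perm (Fin k), ∀ s, x s = x' (μ s) := by
  have hn' : (n : ℂ) ≠ 0 := Nat.cast_ne_zero.mpr (by omega)
  have hsum : ∀ g : C(Z, ℝ), ∑ s, g (x s) = ∑ s, g (x' s) := by
    intro g
    have htr := sum_trace_eq_of_unitary_conj_eq hu₁ hu₂
      (h ⟨fun z => (g z : ℂ) • (1 : Matrix (Fin n) (Fin n) ℂ), by fun_prop⟩)
    simp only [ContinuousMap.coe_mk, trace_smul, trace_one, Fintype.card_fin, smul_eq_mul,
      ← Finset.sum_mul] at htr
    exact_mod_cast mul_right_cancel₀ hn' htr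
  exact exists_perm_eq_comp_of_card_fiber_eq (card_fiber_eq_of_forall_sum_eq hsum)
end

section
/- Let m be a finite index type, let d₁, d₂ : m → ℂ, and let u be an invertible m×m complex matrix (in particular this applies when u is unitary) such that u·diagonal(d₁)·u⁻¹ = diagonal(d₂). Then there exists a permutation σ of m such that d₁(i) = d₂(σ(i)) for all i ∈ m; equivalently, the multisets of diagonal entries of diagonal(d₁) and diagonal(d₂) coincide. -/
open Polynomial Matrix Finset

lemma perm_of_multiset_map_eq {m : Type*} [Fintype m] {α : Type*} (f g : m → α)
    (h : Multiset.map f Finset.univ.val = Multiset.map g Finset.univ.val) :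
    ∃ σ : Equiv.Perm m, ∀ i, f i = g (σ i) := by
  classical
  have hcard : ∀ c : α, Fintype.card {i // f i = c} = Fintype.card {i // g i = c} := by
    intro c
    have hc := congrArg (Multiset.count c) h
    rw [Multiset.count_map, Multiset.count_map] at hc
    rw [Fintype.card_subtype, Fintype.card_subtype]
    simp only [Finset.card, Finset.filter_val]
    simpa [eq_comm] using hc
  let e : ∀ c, {i // f i = c} ≃ {i // g i = c} := fun c => Fintype.equivOfCardEq (hcard c)
  let E : Equiv.Perm m := (Equiv.sigmaFiberEquiv f).symm.trans
    ((Equiv.sigmaCongrRight e).trans (Equiv.sigmaFiberEquiv g))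
  refine ⟨E, fun i => ?_⟩
  have hE : E i = ((e (f i)) ⟨i, rfl⟩ : {j // g j = f i}).1 := rfl
  rw [hE, ((e (f i)) ⟨i, rfl⟩).2]

lemma charpoly_diag {m : Type*} [Fintype m] [DecidableEq m] (d : m → ℂ) :
    (Matrix.diagonal d).charpoly = ∏ i, (X - C (d i)) := by
  have : charmatrix (Matrix.diagonal d) = Matrix.diagonal fun i => X - C (d i) := by
    ext i j
    by_cases hij : i = j
    · subst hij; simp [charmatrix_apply_eq]
    · simp [charmatrix_apply_ne _ _ _ hij, Matrix.diagonal_apply_ne _ hij,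
        Matrix.diagonal_apply_ne d hij]
  rw [Matrix.charpoly, this, Matrix.det_diagonal]

/-- If an invertible matrix conjugates one diagonal matrix into
another, then the diagonals agree up to a permutation; equivalently, the
multisets of diagonal entries coincide. -/
theorem stmt_5 (m : Type*) [Fintype m] [DecidableEq m] (d₁ d₂ : m → ℂ)
    (u : Matrix m m ℂ) (hu : IsUnit u)
    (h : u * Matrix.diagonal d₁ * u⁻¹ = Matrix.diagonal d₂) :
    (∃ σ : Equiv.Perm m, ∀ i, d₁ i = d₂ (σ i)) ∧
    Multiset.map d₁ Finset.univ.val = Multiset.map d₂ Finset.univ.val := by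
  have hdet : IsUnit u.det := (Matrix.isUnit_iff_isUnit_det u).mp hu
  have huu : u * u⁻¹ = 1 := Matrix.mul_nonsing_inv u hdet
  -- charpoly is invariant under conjugation
  have hchar : (Matrix.diagonal d₁).charpoly = (Matrix.diagonal d₂).charpoly := by
    rw [← h]
    set A := Matrix.diagonal d₁
    have hcm : charmatrix (u * A * u⁻¹)
        = u.map C * charmatrix A * (u⁻¹).map C := by
      have h1 : (u.map (C : ℂ →+* ℂ[X]) : Matrix m m ℂ[X]) * (u⁻¹).map C = 1 := by
        rw [← Matrix.map_mul, huu, Matrix.map_one _ (map_zero C) (map_one C)]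
      have hscalar : (u.map (C : ℂ →+* ℂ[X])) * Matrix.scalar m (X : ℂ[X]) *
          (u⁻¹).map C = Matrix.scalar m (X : ℂ[X]) := by
        rw [← (Matrix.scalar_commute X (fun r => (Commute.all _ _)) (u.map C)).eq,
          mul_assoc, h1, mul_one]
      rw [charmatrix, charmatrix, mul_sub, sub_mul, hscalar]
      congr 1
      simp [Matrix.map_mul, mul_assoc]
    rw [Matrix.charpoly, Matrix.charpoly, hcm, Matrix.det_mul, Matrix.det_mul]
    have : (u.map (C : ℂ →+* ℂ[X])).det * ((u⁻¹).map (C : ℂ →+* ℂ[X])).det = 1 := by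
      rw [← Matrix.det_mul, ← Matrix.map_mul, huu, Matrix.map_one _ (map_zero C) (map_one C),
        Matrix.det_one]
    symm
    calc (u.map (C : ℂ →+* ℂ[X])).det * (charmatrix A).det * ((u⁻¹).map C).det
        = (charmatrix A).det * ((u.map (C : ℂ →+* ℂ[X])).det * ((u⁻¹).map C).det) := by ring
      _ = (charmatrix A).det := by rw [this, mul_one]
  rw [charpoly_diag, charpoly_diag] at hchar
  have hmul : Multiset.map d₁ Finset.univ.val = Multiset.map d₂ Finset.univ.val := by
    have h1 : ∀ d : m → ℂ, (∏ i, (X - C (d i))) =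
        ((Multiset.map d Finset.univ.val).map fun a => X - C a).prod := by
      intro d
      rw [Multiset.map_map]
      rfl
    have := congrArg Polynomial.roots hchar
    rwa [h1 d₁, h1 d₂, roots_multiset_prod_X_sub_C, roots_multiset_prod_X_sub_C] at this
  exact ⟨perm_of_multiset_map_eq d₁ d₂ hmul, hmul⟩
end

section
/- Let Z be a compact Hausdorff topological space and let x, x' : Fin k → Z. Suppose that for every continuous function f : Z → ℝ, the multiset {f(x(1)), …, f(x(k))} equals the multiset {f(x'(1)), …, f(x'(k))} (i.e., the multiset image of f ∘ x over Fin k equals that of f ∘ x'). Then there exists a permutation σ of Fin k such that x(s) = x'(σ(s)) for all s ∈ Fin k. -/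
/-!
Since `Z` is Tychonoff, a point `z` can be separated by a continuous real function `f` from the
finitely many other values of `x` and `x'`; the multiplicity of `f z` in the two multisets of values
is then the number of times `z` occurs in `x` and in `x'`, respectively. Tuples with the same fibre
cardinalities differ by a permutation, obtained by gluing bijections between the fibres.
-/

open Finset in
theorem Fintype.exists_equiv_of_map_univ_eq {α β γ : Type*} [Fintype α] [Fintype β]
    {f : α → γ} {g : β → γ} (h : univ.val.map f = univ.val.map g) :
    ∃ e : α ≃ β, ∀ a, f a = g (e a) := by
  classical
  have hcard : ∀ c, Fintype.card {a // f a = c} = Fintype.card {b // g b = c} := fun c => by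
    simpa [Multiset.count_map, Fintype.card_subtype, Finset.card_def, eq_comm]
      using congr_arg (Multiset.count c) h
  exact ⟨.ofFiberEquiv fun c => Fintype.equivOfCardEq (hcard c),
    fun a => (Equiv.ofFiberEquiv_map _ a).symm⟩

theorem Multiset.count_map_eq_count_of_forall_mem {α β : Type*} [DecidableEq α] [DecidableEq β]
    {f : α → β} {s : Multiset α} {a : α} (h : ∀ b ∈ s, f b = f a → b = a) :
    (s.map f).count (f a) = s.count a := by
  rw [count_map, count_eq_card_filter_eq]
  congr 1
  exact filter_congr fun b hb => ⟨fun hab => (h b hb hab.symm).symm, fun hab => hab ▸ rfl⟩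

theorem Multiset.eq_of_forall_map_continuousMap_eq {X : Type*} [TopologicalSpace X] [T35Space X]
    {s t : Multiset X} (h : ∀ f : C(X, ℝ), s.map f = t.map f) : s = t := by
  classical
  refine ext' fun z => ?_
  set K : Set X := ↑((s + t).toFinset.erase z)
  obtain ⟨f, hf, hfz, hfK⟩ := CompletelyRegularSpace.completely_regular z K
    (Finset.finite_toSet _).isClosed (by simp [K])
  let F : C(X, ℝ) := ⟨fun a => f a, continuous_subtype_val.comp hf⟩
  have hsep : ∀ b ∈ s + t, F b = F z → b = z := fun b hb hbz => by
    by_contra hne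
    have : f b = 1 := hfK (by simpa [K, hne] using hb)
    simp [F, this, hfz] at hbz
  calc s.count z = (s.map F).count (F z) :=
        (count_map_eq_count_of_forall_mem fun b hb => hsep b (mem_add.2 (.inl hb))).symm
    _ = (t.map F).count (F z) := by rw [h F]
    _ = t.count z := count_map_eq_count_of_forall_mem fun b hb => hsep b (mem_add.2 (.inr hb))

/-- If for every continuous `f : Z → ℝ` the multisets of values
`{f(x(s))}` and `{f(x'(s))}` (over `s ∈ Fin k`, with multiplicity) agree, then
`x` and `x'` agree up to a permutation of `Fin k`. -/
theorem stmt_8 (Z : Type*) [TopologicalSpace Z] [CompactSpace Z] [T2Space Z]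
    (k : ℕ) (x x' : Fin k → Z)
    (h : ∀ f : C(Z, ℝ),
      Multiset.map (fun s => f (x s)) (Finset.univ : Finset (Fin k)).val
        = Multiset.map (fun s => f (x' s)) (Finset.univ : Finset (Fin k)).val) :
    ∃ σ : Equiv.Perm (Fin k), ∀ s, x s = x' (σ s) := by
  refine Fintype.exists_equiv_of_map_univ_eq
    (Multiset.eq_of_forall_map_continuousMap_eq fun f => ?_)
  simpa only [Multiset.map_map, Function.comp_def] using h f
end
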